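/- Let F be a field of characteristic not 2 or 3 and let k ∈ F be nonzero. Consider the elliptic curve E_k : y² = x³ + k in Weierstrass form over F, and let P be the point of E_k with affine coordinates (x, y), where x, y ∈ F satisfy y² = x³ + k. Then 3·P = 0 in the group of points of E_k if and only if x = 0, or x³ = −4k and y² = −3k. (Thus the nontrivial 3-torsion points of E_k are the two points (0, ±√k), which form the kernel of the 3-isogeny φ, together with the six points (x, y) with x³ = −4k and y² = −3k.) -/

import Mathlib

/-!
If `P ≠ 0` then `3P = 0` means `2P = -P`. Since `2P = P` is impossible, and the only points
sharing the `x`-coordinate of `P` are `±P`, this happens exactly when `P` is not 2-torsion and the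
tangent at `P` meets the curve again above `x(P)`. On `y² = x³ + k` the tangent slope is
`3x² / (2y)`, and `(3x² / (2y))² = 3x` reduces, using `y² = x³ + k`, to `3x (x³ + 4k) = 0`.
-/

/-- The Weierstrass curve `E_k : y² = x³ + k` (in affine form). -/
def Ek (F : Type*) [Field F] (k : F) : WeierstrassCurve.Affine F :=
  { a₁ := 0, a₂ := 0, a₃ := 0, a₄ := 0, a₆ := k }

namespace WeierstrassCurve.Affine.Point

variable {F : Type*} [Field F] [DecidableEq F] {W : WeierstrassCurve.Affine F}

theorem three_nsmul_some_eq_zero_iff {x y : F} (h : W.Nonsingular x y) :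
    3 • some x y h = 0 ↔ y ≠ W.negY x y ∧ W.addX x x (W.slope x x y y) = x := by
  rw [show (3 : ℕ) = 2 + 1 from rfl, succ_nsmul, two_nsmul, add_eq_zero_iff_eq_neg]
  by_cases hy : y = W.negY x y
  · rw [add_self_of_Y_eq hy]
    exact iff_of_false (neg_ne_zero.mpr (some_ne_zero h)).symm fun h' => h'.1 hy
  · have h2P := add_self_of_Y_ne (h₁ := h) hy
    refine ⟨fun h' => ⟨hy, ?_⟩, fun ⟨_, hX⟩ => ?_⟩
    · rw [h2P, neg_some] at h'
      exact (some.inj h').1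
    · rw [h2P]
      refine ((X_eq_iff (h₂ := h)).mp hX).resolve_left fun h' => some_ne_zero h ?_
      rwa [← h2P, add_eq_left] at h'

end WeierstrassCurve.Affine.Point

namespace Ek

variable {F : Type*} [Field F] {k x y : F}

lemma equation_iff : (Ek F k).Equation x y ↔ y ^ 2 = x ^ 3 + k := by
  simp [WeierstrassCurve.Affine.equation_iff, Ek]

lemma negY_eq : (Ek F k).negY x y = -y := by
  simp [Ek, WeierstrassCurve.Affine.negY]

lemma Y_ne_negY_iff (h2 : (2 : F) ≠ 0) : y ≠ (Ek F k).negY x y ↔ y ≠ 0 := by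
  rw [negY_eq, Ne, eq_neg_iff_add_eq_zero, ← two_mul, mul_eq_zero, or_iff_right h2]

lemma slope_self [DecidableEq F] (h2 : (2 : F) ≠ 0) (hy : y ≠ 0) :
    (Ek F k).slope x x y y = 3 * x ^ 2 / (2 * y) := by
  rw [WeierstrassCurve.Affine.slope_of_Y_ne rfl ((Y_ne_negY_iff h2).mpr hy), negY_eq]
  simp only [Ek]
  ring

lemma addX_eq (x₁ x₂ ℓ : F) : (Ek F k).addX x₁ x₂ ℓ = ℓ ^ 2 - x₁ - x₂ := by
  simp [Ek, WeierstrassCurve.Affine.addX]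

lemma addX_slope_self_eq_iff [DecidableEq F] (h2 : (2 : F) ≠ 0) (h3 : (3 : F) ≠ 0)
    (hy : y ≠ 0) (hxy : y ^ 2 = x ^ 3 + k) :
    (Ek F k).addX x x ((Ek F k).slope x x y y) = x ↔ x = 0 ∨ x ^ 3 = -4 * k := by
  have h2y : (2 * y) ^ 2 ≠ 0 := pow_ne_zero 2 (mul_ne_zero h2 hy)
  rw [slope_self h2 hy, addX_eq, sub_sub, sub_eq_iff_eq_add, div_pow, div_eq_iff h2y]
  have hfactor : (3 * x ^ 2) ^ 2 = (x + (x + x)) * (2 * y) ^ 2 ↔ 3 * x * (x ^ 3 + 4 * k) = 0 :=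
    ⟨fun h => by linear_combination -h - 12 * x * hxy,
      fun h => by linear_combination -h - 12 * x * hxy⟩
  rw [hfactor, mul_eq_zero, mul_eq_zero, or_iff_right h3, add_eq_zero_iff_eq_neg, neg_mul]

end Ek

open Classical in
theorem three_torsion_Ek {F : Type*} [Field F]
    (h2 : (2 : F) ≠ 0) (h3 : (3 : F) ≠ 0) (k : F) (hk : k ≠ 0)
    (x y : F) (hns : (Ek F k).Nonsingular x y) :
    3 • WeierstrassCurve.Affine.Point.some x y hns = 0 ↔
      x = 0 ∨ (x ^ 3 = -4 * k ∧ y ^ 2 = -3 * k) := by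
  have hxy : y ^ 2 = x ^ 3 + k := Ek.equation_iff.mp hns.1
  rw [WeierstrassCurve.Affine.Point.three_nsmul_some_eq_zero_iff, Ek.Y_ne_negY_iff h2]
  constructor
  · rintro ⟨hy, hX⟩
    rw [Ek.addX_slope_self_eq_iff h2 h3 hy hxy] at hX
    exact hX.imp_right fun hx => ⟨hx, by linear_combination hxy + hx⟩
  · intro h
    have hy : y ≠ 0 := by
      refine (pow_ne_zero_iff two_ne_zero).mp ?_
      rcases h with rfl | ⟨-, hy2⟩
      · simpa [hxy] using hk
      · rw [hy2]
        exact mul_ne_zero (neg_ne_zero.mpr h3) hk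
    exact ⟨hy, (Ek.addX_slope_self_eq_iff h2 h3 hy hxy).mpr (h.imp_right And.left)⟩
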